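/- The set of coefficient vectors (α1, α2, β1, β2, β3, β4, γ1, γ2) ∈ ℂ⁸ such that α1·xy + α2·yx + β1·x̄y + β2·x ȳ + β3·ȳx + β4·y x̄ + γ1·(xy)‾ + γ2·(yx)‾ = 0 for all x, y ∈ A5 is exactly the 2-dimensional subspace of ℂ⁸ spanned by (1, −1, 0, 0, 0, 0, −1, 1) and (0, 0, 1, 1, −1, −1, 0, 0). -/
import Mathlib


set_option linter.unreachableTactic false
set_option linter.unnecessarySeqFocus false
set_option linter.unusedTactic false

noncomputable section

/-- The underlying space of our 3-dimensional algebras. -/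
abbrev V3 : Type := Fin 3 → ℂ
/-- Multiplication of `A5` (and of `S2`): unit `e1`, with `e2 * e3 = e2`,
`e3 * e2 = -e2`, `e3 * e3 = e1` and `e2 * e2 = 0`. -/
def A5mul : V3 →ₗ[ℂ] V3 →ₗ[ℂ] V3 :=
  LinearMap.mk₂ ℂ
    (fun x y => ![x 0 * y 0 + x 2 * y 2,
                  x 0 * y 1 + x 1 * y 0 + x 1 * y 2 - x 2 * y 1,
                  x 0 * y 2 + x 2 * y 0])
    (fun x x' y => by funext k; fin_cases k <;> simp <;> ring)
    (fun a x y => by funext k; fin_cases k <;> simp <;> ring)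
    (fun x y y' => by funext k; fin_cases k <;> simp <;> ring)
    (fun a x y => by funext k; fin_cases k <;> simp <;> ring)
/-- The involution of type `(2,1)`: it fixes `e1, e2` and sends `e3` to `-e3`. -/
def conjH : V3 →ₗ[ℂ] V3 where
  toFun x := ![x 0, x 1, -x 2]
  map_add' x y := by funext k; fin_cases k <;> simp <;> ring
  map_smul' a x := by funext k; fin_cases k <;> simp <;> ring

set_option maxHeartbeats 1000000 in
lemma A5mul_apply (x y : V3) :
    A5mul x y = ![x 0 * y 0 + x 2 * y 2,
      x 0 * y 1 + x 1 * y 0 + x 1 * y 2 - x 2 * y 1,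
      x 0 * y 2 + x 2 * y 0] := rfl

lemma conjH_apply (x : V3) : conjH x = ![x 0, x 1, -x 2] := rfl

set_option maxHeartbeats 2000000 in
/-- **Theorem.** The coefficient vectors `(α1, α2, β1, β2, β3, β4, γ1, γ2) ∈ ℂ⁸`
such that `α1 xy + α2 yx + β1 x̄y + β2 x ȳ + β3 ȳx + β4 y x̄ + γ1 (xy)‾ + γ2 (yx)‾ = 0`
holds for all `x, y ∈ A5` form exactly the 2-dimensional subspace of `ℂ⁸`
spanned by `(1, −1, 0, 0, 0, 0, −1, 1)` and `(0, 0, 1, 1, −1, −1, 0, 0)`. -/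
theorem degree_two_functional_identities_of_A5 :
    {v : Fin 8 → ℂ | ∀ x y : V3,
        v 0 • A5mul x y + v 1 • A5mul y x + v 2 • A5mul (conjH x) y +
          v 3 • A5mul x (conjH y) + v 4 • A5mul (conjH y) x + v 5 • A5mul y (conjH x) +
          v 6 • conjH (A5mul x y) + v 7 • conjH (A5mul y x) = 0}
      = ↑(Submodule.span ℂ
          ({![1, -1, 0, 0, 0, 0, -1, 1], ![0, 0, 1, 1, -1, -1, 0, 0]} : Set (Fin 8 → ℂ))) ∧
    Module.finrank ℂ (Submodule.span ℂ
          ({![1, -1, 0, 0, 0, 0, -1, 1], ![0, 0, 1, 1, -1, -1, 0, 0]} : Set (Fin 8 → ℂ))) = 2 := by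
  constructor
  · ext v
    simp only [Set.mem_setOf_eq, SetLike.mem_coe]
    constructor
    · intro hv
      have E1 := congrFun (hv ![1,0,0] ![1,0,0]) 0
      have E2 := congrFun (hv ![0,0,1] ![0,0,1]) 0
      have E3 := congrFun (hv ![0,1,0] ![0,0,1]) 1
      have E4 := congrFun (hv ![0,0,1] ![0,1,0]) 1
      have E5 := congrFun (hv ![1,0,0] ![0,0,1]) 2
      have E6 := congrFun (hv ![0,0,1] ![1,0,0]) 2
      simp only [A5mul_apply, conjH_apply, Pi.add_apply, Pi.smul_apply, Pi.zero_apply,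
        Matrix.cons_val_zero, Matrix.cons_val_one, Matrix.head_cons, Matrix.cons_val_two,
        Matrix.tail_cons, smul_eq_mul] at E1 E2 E3 E4 E5 E6
      norm_num at E1 E2 E3 E4 E5 E6
      have hveq : v = v 0 • ![1,-1,0,0,0,0,-1,1] + v 2 • ![0,0,1,1,-1,-1,0,0] := by
        funext k
        fin_cases k
        · show v 0 = v 0 * 1 + v 2 * 0; ring
        · show v 1 = v 0 * (-1) + v 2 * 0
          linear_combination (1/4 : ℂ) * E1 + (1/4 : ℂ) * E2 + (1/4 : ℂ) * E5 + (1/4 : ℂ) * E6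
        · show v 2 = v 0 * 0 + v 2 * 1; ring
        · show v 3 = v 0 * 0 + v 2 * 1
          linear_combination (-1/4 : ℂ) * E3 + (-1/4 : ℂ) * E4 + (-1/4 : ℂ) * E5 + (1/4 : ℂ) * E6
        · show v 4 = v 0 * 0 + v 2 * (-1)
          linear_combination (1/4 : ℂ) * E1 + (-1/4 : ℂ) * E2 + (1/4 : ℂ) * E3 + (1/4 : ℂ) * E4
        · show v 5 = v 0 * 0 + v 2 * (-1)
          linear_combination (1/4 : ℂ) * E1 + (-1/4 : ℂ) * E2 + (1/4 : ℂ) * E5 + (-1/4 : ℂ) * E6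
        · show v 6 = v 0 * (-1) + v 2 * 0
          linear_combination (1/4 : ℂ) * E1 + (1/4 : ℂ) * E2 + (1/4 : ℂ) * E3 + (-1/4 : ℂ) * E4
        · show v 7 = v 0 * 1 + v 2 * 0
          linear_combination (-1/4 : ℂ) * E3 + (1/4 : ℂ) * E4 + (-1/4 : ℂ) * E5 + (-1/4 : ℂ) * E6
      rw [hveq]
      exact Submodule.add_mem _
        (Submodule.smul_mem _ _ (Submodule.subset_span (by simp)))
        (Submodule.smul_mem _ _ (Submodule.subset_span (by simp)))
    · intro hv
      rw [Submodule.mem_span_pair] at hv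
      obtain ⟨a, b, rfl⟩ := hv
      intro x y
      funext k
      fin_cases k <;>
        simp [A5mul_apply, conjH_apply,
          show ∀ r : ℂ, (![r,-r,0,0,0,0,-r,r]) 3 = 0 from fun _ => rfl,
          show ∀ r : ℂ, (![r,-r,0,0,0,0,-r,r]) 4 = 0 from fun _ => rfl,
          show ∀ r : ℂ, (![r,-r,0,0,0,0,-r,r]) 5 = 0 from fun _ => rfl,
          show ∀ r : ℂ, (![r,-r,0,0,0,0,-r,r]) 6 = -r from fun _ => rfl,
          show ∀ r : ℂ, (![r,-r,0,0,0,0,-r,r]) 7 = r from fun _ => rfl,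
          show ∀ r : ℂ, (![0,0,r,r,-r,-r,0,0]) 3 = r from fun _ => rfl,
          show ∀ r : ℂ, (![0,0,r,r,-r,-r,0,0]) 4 = -r from fun _ => rfl,
          show ∀ r : ℂ, (![0,0,r,r,-r,-r,0,0]) 5 = -r from fun _ => rfl,
          show ∀ r : ℂ, (![0,0,r,r,-r,-r,0,0]) 6 = 0 from fun _ => rfl,
          show ∀ r : ℂ, (![0,0,r,r,-r,-r,0,0]) 7 = 0 from fun _ => rfl] <;>
      ring
  · have hli : LinearIndependent ℂ
        ![(![1,-1,0,0,0,0,-1,1] : Fin 8 → ℂ), ![0,0,1,1,-1,-1,0,0]] := by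
      rw [LinearIndependent.pair_iff]
      intro s t h
      constructor
      · simpa using congrFun h 0
      · simpa using congrFun h 2
    have h2 := finrank_span_eq_card hli
    have hr : Set.range ![(![1,-1,0,0,0,0,-1,1] : Fin 8 → ℂ), ![0,0,1,1,-1,-1,0,0]]
        = ({![1,-1,0,0,0,0,-1,1], ![0,0,1,1,-1,-1,0,0]} : Set (Fin 8 → ℂ)) := by
      ext w
      simp [Fin.exists_fin_two, or_comm]
    rw [hr] at h2
    simpa using h2
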